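/- Let 0 < δ < π/2. Then the function V^δ is twice continuously differentiable on ℝ, satisfies (V^δ)″(x) ≥ cos δ for all x ∈ ℝ with inf_{x∈ℝ}(V^δ)″(x) = cos δ, and satisfies V^δ(x) ≥ −cos x for all x ∈ ℝ. -/

import Mathlib

open MeasureTheory Real Filter Topology

namespace XYPaper

noncomputable section

/-! ### Lattice geometry -/

/-- The real point of `ℝ^d` corresponding to the lattice point `z ∈ ℤ^d`, scaled by `ε`. -/
def toPt (d : ℕ) (ε : ℝ) (z : Fin d → ℤ) : Fin d → ℝ := fun i => ε * (z i : ℝ)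

/-- `z` is a site of `D^ε = D ∩ εℤ^d` (in lattice coordinates). -/
def IsSite (d : ℕ) (D : Set (Fin d → ℝ)) (ε : ℝ) (z : Fin d → ℤ) : Prop := toPt d ε z ∈ D

/-- Nearest-neighbour adjacency in `ℤ^d`. -/
def Adj (d : ℕ) (z w : Fin d → ℤ) : Prop := (∑ i, |z i - w i|) = 1

/-- Directed nearest-neighbour edge of `D^ε`: both endpoints are sites of `D^ε`. -/
def IsEdge (d : ℕ) (D : Set (Fin d → ℝ)) (ε : ℝ) (p : (Fin d → ℤ) × (Fin d → ℤ)) : Prop :=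
  IsSite d D ε p.1 ∧ IsSite d D ε p.2 ∧ Adj d p.1 p.2

/-- Boundary site of `D^ε`: a site adjacent in `εℤ^d` to a vertex outside `D^ε`. -/
def IsBdry (d : ℕ) (D : Set (Fin d → ℝ)) (ε : ℝ) (z : Fin d → ℤ) : Prop :=
  IsSite d D ε z ∧ ∃ w, Adj d z w ∧ ¬ IsSite d D ε w

/-- Interior (non-boundary) site of `D^ε`. -/
def IsInterior (d : ℕ) (D : Set (Fin d → ℝ)) (ε : ℝ) (z : Fin d → ℤ) : Prop :=
  IsSite d D ε z ∧ ¬ IsBdry d D ε z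

/-- The set of all sites of `D^ε`. -/
def siteSet (d : ℕ) (D : Set (Fin d → ℝ)) (ε : ℝ) : Set (Fin d → ℤ) := {z | IsSite d D ε z}

/-! ### Configurations and Gibbs measures -/

/-- Extend a configuration defined on the (interior) sites `I` by zero. -/
def extendZero {V : Type*} [DecidableEq V] (I : Finset V) (θ : ↥I → ℝ) : V → ℝ :=
  fun z => if h : z ∈ I then θ ⟨z, h⟩ else 0

/-- Extend a configuration defined on the (interior) sites `I` by the boundary datum `f`. -/
def extendBy {V : Type*} [DecidableEq V] (I : Finset V) (f : V → ℝ) (θ : ↥I → ℝ) : V → ℝ :=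
  fun z => if h : z ∈ I then θ ⟨z, h⟩ else f z

/-- The normalized (probability, when the normalization is finite and nonzero) measure on
`ℝ^ι` with the given density with respect to Lebesgue measure. -/
def normGibbs {ι : Type*} [Fintype ι] (f : (ι → ℝ) → ENNReal) : Measure (ι → ℝ) :=
  ((volume.withDensity f) Set.univ)⁻¹ • volume.withDensity f

/-- The Gibbs measure with edge potentials `W e`, zero boundary conditions outside the
interior vertex set `I`, and Hamiltonian `∑_{e ∈ E} W e (θ(e₁) - θ(e₂))`. -/
def gibbsMeasure {V : Type*} [DecidableEq V] (I : Finset V) (E : Finset (V × V))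
    (W : V × V → ℝ → ℝ) : Measure (↥I → ℝ) :=
  normGibbs fun θ =>
    ENNReal.ofReal (Real.exp (-∑ e ∈ E, W e (extendZero I θ e.1 - extendZero I θ e.2)))

/-- The gradient Gibbs measure with potential `V`, inverse temperature `β`, zero boundary
conditions. -/
def gradGibbs {Vtx : Type*} [DecidableEq Vtx] (I : Finset Vtx) (E : Finset (Vtx × Vtx))
    (β : ℝ) (V : ℝ → ℝ) : Measure (↥I → ℝ) :=
  gibbsMeasure I E (fun _ x => β * V x)

/-- The Ginzburg–Landau measure with potential `U` and boundary condition `f`. -/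
def glGibbs {Vtx : Type*} [DecidableEq Vtx] (I : Finset Vtx) (E : Finset (Vtx × Vtx))
    (U : ℝ → ℝ) (f : Vtx → ℝ) : Measure (↥I → ℝ) :=
  normGibbs fun θ =>
    ENNReal.ofReal (Real.exp (-∑ e ∈ E, U (extendBy I f θ e.2 - extendBy I f θ e.1)))

/-- The XY Gibbs measure with Dirichlet (zero) boundary conditions: the angular variables
take values in `[-π, π)` and the density is `exp(β ∑_{(i,j)} cos(θ i - θ j))`. -/
def xyGibbs {Vtx : Type*} [DecidableEq Vtx] (I : Finset Vtx) (E : Finset (Vtx × Vtx))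
    (β : ℝ) : Measure (↥I → ℝ) :=
  normGibbs fun θ =>
    Set.indicator {θ' : ↥I → ℝ | ∀ z, θ' z ∈ Set.Ico (-π) π}
      (fun θ' => ENNReal.ofReal
        (Real.exp (β * ∑ e ∈ E, Real.cos (extendZero I θ' e.1 - extendZero I θ' e.2)))) θ

/-- The representative of `x` modulo `2π` lying in `[-π, π)`. -/
def angleRep (x : ℝ) : ℝ := x - 2 * π * (⌊(x + π) / (2 * π)⌋ : ℤ)

/-- The gradient variable of the XY model on the directed edge `p = (i,j)`:
the representative of `θ(j) - θ(i)` modulo `2π` lying in `[-π,π)`. -/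
def etaXY {V : Type*} [DecidableEq V] (I : Finset V) (θ : ↥I → ℝ) (p : V × V) : ℝ :=
  angleRep (extendZero I θ p.2 - extendZero I θ p.1)

/-- The gradient variable of a gradient field on the directed edge `p = (i,j)`:
`η(p) = θ(j) - θ(i)`. -/
def etaGrad {V : Type*} [DecidableEq V] (I : Finset V) (θ : ↥I → ℝ) (p : V × V) : ℝ :=
  extendZero I θ p.2 - extendZero I θ p.1

/-- The fluctuation-field pairing `⟨η̃, φ⟩ = ε^{d/2-1} ∑_b ∇φ(b) √β η(b)`. -/
def pairing {d : ℕ} (ε β : ℝ) (E : Finset ((Fin d → ℤ) × (Fin d → ℤ)))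
    (φ : (Fin d → ℝ) → ℝ) (ηf : (Fin d → ℤ) × (Fin d → ℤ) → ℝ) : ℝ :=
  ε ^ ((d : ℝ) / 2 - 1) *
    ∑ b ∈ E, (φ (toPt d ε b.2) - φ (toPt d ε b.1)) * (Real.sqrt β * ηf b)

/-- `⟨∂φ, ∂φ⟩ = ∫_D ∑_α (∂φ/∂x_α)² dx`. -/
def dirichletEnergy {d : ℕ} (D : Set (Fin d → ℝ)) (φ : (Fin d → ℝ) → ℝ) : ℝ :=
  ∫ x in D, ∑ α : Fin d, (fderiv ℝ φ x (Pi.single α 1)) ^ 2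

/-- `φ ∈ C₀^∞(D)`. -/
def IsTestFun {d : ℕ} (D : Set (Fin d → ℝ)) (φ : (Fin d → ℝ) → ℝ) : Prop :=
  ContDiff ℝ (⊤ : ℕ∞) φ ∧ HasCompactSupport φ ∧ tsupport φ ⊆ D

/-- `D` is a bounded domain (open, bounded and connected) with smooth boundary: it is a
regular sublevel set of a smooth function. -/
def SmoothBoundedDomain {d : ℕ} (D : Set (Fin d → ℝ)) : Prop :=
  IsOpen D ∧ Bornology.IsBounded D ∧ IsConnected D ∧
    ∃ F : (Fin d → ℝ) → ℝ, ContDiff ℝ (⊤ : ℕ∞) F ∧ D = F ⁻¹' Set.Iio 0 ∧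
      ∀ x ∈ frontier D, fderiv ℝ F x ≠ 0

/-! ### Loops, plaquettes, discrete simple connectivity -/

/-- A loop in the vertex set `S`: a nonempty list of vertices of `S`, with consecutive
vertices adjacent, starting and ending at the same vertex. -/
def IsLoopIn (d : ℕ) (S : Set (Fin d → ℤ)) (L : List (Fin d → ℤ)) : Prop :=
  L ≠ [] ∧ L.head? = L.getLast? ∧ (∀ z ∈ L, z ∈ S) ∧ L.Chain' (Adj d)

/-- A path in `S` from `x` to `y`. -/
def IsPathFrom (d : ℕ) (S : Set (Fin d → ℤ)) (x y : Fin d → ℤ) (P : List (Fin d → ℤ)) :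
    Prop :=
  P ≠ [] ∧ P.head? = some x ∧ P.getLast? = some y ∧ (∀ z ∈ P, z ∈ S) ∧ P.Chain' (Adj d)

/-- Sum of an edge function along the consecutive (directed) edges of a path. -/
def pathSum {d : ℕ} (ω : (Fin d → ℤ) × (Fin d → ℤ) → ℝ) (P : List (Fin d → ℤ)) : ℝ :=
  ((P.zip P.tail).map ω).sum

/-- The 1-chain (with integer coefficients, modulo orientation reversal) associated with a
list of vertices, assigning to the directed edge `e` the (algebraic) number of times it is
traversed. -/
def loopChain {d : ℕ} (L : List (Fin d → ℤ)) (e : (Fin d → ℤ) × (Fin d → ℤ)) : ℤ :=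
  ((L.zip L.tail).count e : ℤ) - ((L.zip L.tail).count (e.2, e.1) : ℤ)

/-- The boundary chain of the plaquette with base `z` and directions `k, l`. -/
def plaqChain (d : ℕ) (z : Fin d → ℤ) (k l : Fin d) :
    (Fin d → ℤ) × (Fin d → ℤ) → ℤ :=
  loopChain [z, z + Pi.single k 1, z + Pi.single k 1 + Pi.single l 1, z + Pi.single l 1, z]

/-- `(D^ε)^*` (with site set `S`) is simply connected: every site self-avoiding loop can be
deformed to a trivial loop (with no edge) by a finite sequence of loops each differing
(algebraically, i.e. on the level of 1-chains) from the previous one by a single plaquette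
of `S`. -/
def SimplyConnectedLat (d : ℕ) (S : Set (Fin d → ℤ)) : Prop :=
  ∀ L : List (Fin d → ℤ), IsLoopIn d S L → L.dropLast.Nodup →
    ∃ (N : ℕ) (B : ℕ → List (Fin d → ℤ)),
      B 0 = L ∧ (∀ j ≤ N, IsLoopIn d S (B j)) ∧ (∃ z, B N = [z]) ∧
      ∀ j < N, ∃ (z : Fin d → ℤ) (k l : Fin d) (c : ℤ),
        k ≠ l ∧ (c = 1 ∨ c = -1) ∧
        z ∈ S ∧ z + Pi.single k 1 ∈ S ∧ z + Pi.single l 1 ∈ S ∧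
          z + Pi.single k 1 + Pi.single l 1 ∈ S ∧
        ∀ e, loopChain (B (j + 1)) e = loopChain (B j) e + c * plaqChain d z k l e

/-- `D` is discretely simply connected. -/
def DiscretelySimplyConnected (d : ℕ) (D : Set (Fin d → ℝ)) : Prop :=
  ∀ ε > (0 : ℝ), SimplyConnectedLat d (siteSet d D ε)

/-- The lattice set `S` is connected (by nearest-neighbour paths inside `S`). -/
def LatticeConnected (d : ℕ) (S : Set (Fin d → ℤ)) : Prop :=
  ∀ x ∈ S, ∀ y ∈ S, ∃ P, IsPathFrom d S x y P

/-! ### The convex potential `V^δ` -/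

/-- The convexified cosine potential `V^δ`. -/
def Vdelta (δ : ℝ) (x : ℝ) : ℝ :=
  if |x| ≤ δ then -Real.cos x
  else if δ < x then
    -Real.cos δ + Real.sin δ * (x - δ) + Real.cos δ / 2 * (x - δ) ^ 2
  else
    -Real.cos δ - Real.sin δ * (x + δ) + Real.cos δ / 2 * (x + δ) ^ 2

/-! ### Discrete harmonicity (d = 2) -/

/-- `h` is discrete harmonic on `S`: at every `x ∈ S` all of whose neighbours lie in `S`,
`h x` is the average of `h` over the four nearest neighbours. -/
def DiscreteHarmonicOn (S : Set (Fin 2 → ℤ)) (h : (Fin 2 → ℤ) → ℝ) : Prop :=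
  ∀ z ∈ S, (∀ w, Adj 2 z w → w ∈ S) →
    h z = (h (z + Pi.single 0 1) + h (z - Pi.single 0 1) +
           h (z + Pi.single 1 1) + h (z - Pi.single 1 1)) / 4

/-- `D^ε(r)`: sites of `D^ε` at (Euclidean-equivalent, here `ε`-scaled ℓ¹) distance more
than `r` from the boundary sites of `D^ε`. -/
def DrSet (D : Set (Fin 2 → ℝ)) (ε r : ℝ) : Set (Fin 2 → ℤ) :=
  {z | IsSite 2 D ε z ∧ ∀ w, IsBdry 2 D ε w → r < ε * ∑ i, |(z i : ℝ) - (w i : ℝ)|}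

end

end XYPaper

open XYPaper

/-! The potential `V^δ` is `-cos` on `[-δ, δ]`, continued outside by its second-order Taylor
polynomials at `±δ`. Such a continuation of a differentiable `f` is differentiable, and its
derivative is the first-order continuation of `f'`; applied twice this makes `V^δ` a `C²`
function with `(V^δ)'' = cos ∘ clamp`, where `clamp` is the projection onto `[-δ, δ]`. Both
bounds then come from `|clamp x| ≤ δ < π/2`, the second one through the addition formula for
`cos` with `cos t ≥ 1 - t²/2` and `|sin t| ≤ |t|`. -/

open Set

theorem hasDerivWithinAt_of_isClosed_of_eqOn {𝕜 F : Type*} [NontriviallyNormedField 𝕜]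
    [NormedAddCommGroup F] [NormedSpace 𝕜 F] {f g f' : 𝕜 → F} {s : Set 𝕜}
    (hs : IsClosed s) (hfg : EqOn f g s) (hg : ∀ y ∈ s, HasDerivAt g (f' y) y) (x : 𝕜) :
    HasDerivWithinAt f (f' x) s x := by
  by_cases hx : x ∈ s
  · exact (hg x hx).hasDerivWithinAt.congr hfg (hfg hx)
  · exact HasFDerivWithinAt.of_notMem_closure (hs.closure_eq.symm ▸ hx)

theorem contDiff_two_of_hasDerivAt {f f₁ f₂ : ℝ → ℝ} (hf : ∀ x, HasDerivAt f (f₁ x) x)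
    (hf₁ : ∀ x, HasDerivAt f₁ (f₂ x) x) (hf₂ : Continuous f₂) : ContDiff ℝ 2 f := by
  have hderiv : deriv f = f₁ := funext fun x => (hf x).deriv
  have hderiv₁ : deriv f₁ = f₂ := funext fun x => (hf₁ x).deriv
  rw [show (2 : WithTop ℕ∞) = 1 + 1 from rfl, contDiff_succ_iff_deriv, hderiv,
    contDiff_one_iff_deriv, hderiv₁]
  exact ⟨fun x => (hf x).differentiableAt, by simp, fun x => (hf₁ x).differentiableAt, hf₂⟩

theorem cos_le_cos_of_abs_le {s t : ℝ} (hst : |s| ≤ t) (ht : t ≤ π) : cos t ≤ cos s := by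
  rw [← cos_abs s]
  exact cos_le_cos_of_nonneg_of_le_pi (abs_nonneg s) ht hst

theorem neg_cos_add_le {s t : ℝ} (hs : 0 ≤ cos s) (hst : 0 ≤ sin s * t) :
    -cos (s + t) ≤ -cos s + sin s * t + cos s / 2 * t ^ 2 := by
  have hcos : 1 - t ^ 2 / 2 ≤ cos t := one_sub_sq_div_two_le_cos
  have hsin : sin s * sin t ≤ sin s * t := calc
    sin s * sin t ≤ |sin s| * |sin t| := by rw [← abs_mul]; exact le_abs_self _
    _ ≤ |sin s| * |t| := mul_le_mul_of_nonneg_left abs_sin_le_abs (abs_nonneg _)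
    _ = sin s * t := by rw [← abs_mul, abs_of_nonneg hst]
  rw [cos_add]
  nlinarith [mul_le_mul_of_nonneg_left hcos hs]

section TaylorExtend

variable {a b : ℝ} (hab : a ≤ b)

/-- Inside `[a, b]` this is `f`; outside, the quadratic Taylor polynomial at the nearer endpoint,
with `f'` and `f''` in the roles of the first and second derivative. -/
noncomputable def taylorExtend (f f' f'' : ℝ → ℝ) (x : ℝ) : ℝ :=
  f (projIcc a b hab x) + f' (projIcc a b hab x) * (x - projIcc a b hab x) +
    f'' (projIcc a b hab x) / 2 * (x - projIcc a b hab x) ^ 2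

variable {hab} {f f' f'' : ℝ → ℝ} {x : ℝ}

theorem taylorExtend_of_le_left (hx : x ≤ a) :
    taylorExtend hab f f' f'' x = f a + f' a * (x - a) + f'' a / 2 * (x - a) ^ 2 := by
  simp [taylorExtend, projIcc_of_le_left hab hx]

theorem taylorExtend_of_mem (hx : x ∈ Icc a b) : taylorExtend hab f f' f'' x = f x := by
  simp [taylorExtend, projIcc_of_mem hab hx]

theorem taylorExtend_of_right_le (hx : b ≤ x) :
    taylorExtend hab f f' f'' x = f b + f' b * (x - b) + f'' b / 2 * (x - b) ^ 2 := by
  simp [taylorExtend, projIcc_of_right_le hab hx]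

theorem hasDerivAt_taylorExtend (hf : ∀ y, HasDerivAt f (f' y) y) (x : ℝ) :
    HasDerivAt (taylorExtend hab f f' f'') (taylorExtend hab f' f'' 0 x) x := by
  have hquad (c y : ℝ) :
      HasDerivAt (fun z => f c + f' c * (z - c) + f'' c / 2 * (z - c) ^ 2)
        (f' c + f'' c * (y - c) + 0 / 2 * (y - c) ^ 2) y := by
    have hlin := (hasDerivAt_id' y).sub_const c
    exact ((hlin.const_mul (f' c)).const_add (f c)).add ((hlin.pow 2).const_mul (f'' c / 2))
      |>.congr_deriv (by ring)
  have hcover : Iic a ∪ Icc a b ∪ Ici b = univ := by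
    rw [Iic_union_Icc_eq_Iic hab, Iic_union_Ici]
  rw [← hasDerivWithinAt_univ, ← hcover]
  refine ((hasDerivWithinAt_of_isClosed_of_eqOn isClosed_Iic
      (fun y hy => taylorExtend_of_le_left hy) ?_ x).union
    (hasDerivWithinAt_of_isClosed_of_eqOn isClosed_Icc
      (fun y hy => taylorExtend_of_mem hy) ?_ x)).union
    (hasDerivWithinAt_of_isClosed_of_eqOn isClosed_Ici
      (fun y hy => taylorExtend_of_right_le hy) ?_ x)
  · intro y hy
    rw [taylorExtend_of_le_left hy]
    exact hquad a y
  · intro y hy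
    rw [taylorExtend_of_mem hy]
    exact hf y
  · intro y hy
    rw [taylorExtend_of_right_le hy]
    exact hquad b y

theorem hasDerivAt_taylorExtend_sin (x : ℝ) :
    HasDerivAt (taylorExtend hab sin cos 0) (cos (projIcc a b hab x)) x := by
  have h := hasDerivAt_taylorExtend (hab := hab) (f'' := 0) hasDerivAt_sin x
  rwa [taylorExtend, Pi.zero_apply, zero_mul, zero_div, zero_mul, add_zero, add_zero] at h

end TaylorExtend

namespace XYPaper

variable {δ : ℝ}

theorem Vdelta_eq_taylorExtend (hδ : 0 ≤ δ) :
    Vdelta δ = taylorExtend (neg_le_self hδ) (fun x => -cos x) sin cos := by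
  funext x
  unfold Vdelta
  split_ifs with hmid hright
  · rw [taylorExtend_of_mem (abs_le.mp hmid)]
  · rw [taylorExtend_of_right_le hright.le]
  · rw [abs_le, not_and_or, not_le, not_le] at hmid
    rw [taylorExtend_of_le_left (by linarith [hmid.resolve_right hright]), cos_neg, sin_neg]
    ring

theorem hasDerivAt_Vdelta (hδ : 0 ≤ δ) (x : ℝ) :
    HasDerivAt (Vdelta δ) (taylorExtend (neg_le_self hδ) sin cos 0 x) x := by
  rw [Vdelta_eq_taylorExtend hδ]
  exact hasDerivAt_taylorExtend (fun y => by simpa using (hasDerivAt_cos y).fun_neg) x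

theorem neg_cos_le_Vdelta (hδ : 0 ≤ δ) (hδπ : δ ≤ π / 2) (x : ℝ) :
    -cos x ≤ Vdelta δ x := by
  have hcos : 0 ≤ cos δ := cos_nonneg_of_neg_pi_div_two_le_of_le (by linarith) hδπ
  have hsin : 0 ≤ sin δ := sin_nonneg_of_nonneg_of_le_pi hδ (by linarith [pi_pos])
  rw [Vdelta_eq_taylorExtend hδ]
  rcases le_or_gt x (-δ) with hx | hx
  · have h := neg_cos_add_le (s := -δ) (t := x + δ) (by rwa [cos_neg])
      (by rw [sin_neg]; nlinarith)
    rw [taylorExtend_of_le_left hx, sub_neg_eq_add]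
    convert h using 3
    ring
  rcases le_or_gt x δ with hx' | hx'
  · rw [taylorExtend_of_mem ⟨hx.le, hx'⟩]
  · have h := neg_cos_add_le (s := δ) (t := x - δ) hcos (by nlinarith)
    rw [taylorExtend_of_right_le hx'.le]
    convert h using 3
    ring

end XYPaper

/-- Properties of the convexified potential `V^δ` (for `0 < δ < π/2`): it is C², its second
derivative is bounded below by `cos δ` with infimum exactly `cos δ`, and `V^δ(x) ≥ -cos x`. -/
theorem Vdelta_properties (δ : ℝ) (hδ0 : 0 < δ) (hδ : δ < π / 2) :
    ContDiff ℝ 2 (Vdelta δ) ∧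
    (∀ x : ℝ, Real.cos δ ≤ iteratedDeriv 2 (Vdelta δ) x) ∧
    IsGLB (Set.range (iteratedDeriv 2 (Vdelta δ))) (Real.cos δ) ∧
    ∀ x : ℝ, -Real.cos x ≤ Vdelta δ x := by
  have hV := hasDerivAt_Vdelta hδ0.le
  have hV' := hasDerivAt_taylorExtend_sin (hab := neg_le_self hδ0.le)
  have hV'' :
      iteratedDeriv 2 (Vdelta δ) = fun x => cos (projIcc (-δ) δ (neg_le_self hδ0.le) x) := by
    rw [iteratedDeriv_succ, iteratedDeriv_one, funext fun x => (hV x).deriv]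
    exact funext fun x => (hV' x).deriv
  have hbound (x : ℝ) : cos δ ≤ cos (projIcc (-δ) δ (neg_le_self hδ0.le) x) :=
    cos_le_cos_of_abs_le (abs_le.mpr (projIcc _ _ _ x).2) (by linarith [pi_pos])
  refine ⟨contDiff_two_of_hasDerivAt hV hV' (by fun_prop), fun x => hV'' ▸ hbound x, ?_,
    neg_cos_le_Vdelta hδ0.le hδ.le⟩
  rw [hV'']
  exact IsLeast.isGLB
    ⟨⟨δ, by dsimp only; rw [projIcc_of_right_le _ le_rfl]⟩, forall_mem_range.2 hbound⟩
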